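/- arXiv:0912.5034 — 3 statements merged into one kernel-verified Lean document; each statement's English description precedes it below -/
import Mathlib

section
/- Writing a_j and b_j for the coefficients of z^j in A_n and B_n respectively, for every ℓ with 0 ≤ ℓ ≤ n−1 one has Σ_{j=0}^{ℓ} ( b_{n+j−ℓ}·conj(b_j) − a_{n+j−ℓ}·conj(a_j) ) = 0. -/
open Polynomial

/-- The pair `(A_j, B_j)` of polynomials from the recursion (1.8a):
`A_0 = γ_n`, `B_0 = 1`, `A_{j+1}(z) = z·A_j(z) + γ_{n-j-1}·B_j(z)`,
`B_{j+1}(z) = z·conj(γ_{n-j-1})·A_j(z) + B_j(z)`. -/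
noncomputable def schurAB (γ : ℕ → ℂ) (n : ℕ) : ℕ → Polynomial ℂ × Polynomial ℂ
  | 0 => (C (γ n), 1)
  | j + 1 =>
      (X * (schurAB γ n j).1 + C (γ (n - j - 1)) * (schurAB γ n j).2,
       X * C (starRingEnd ℂ (γ (n - j - 1))) * (schurAB γ n j).1 + (schurAB γ n j).2)

/-!
For a polynomial `p` of degree at most `N`, `conjReflect N p` is `p^*(z) = z^N · conj (p (1 / conj z))`.
One step of the recursion multiplies `B B^* - A A^*` by `(1 - |γ|²) z`, so `B_n B_n^* - A_n A_n^*`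
is a single monomial `c z^n`. The sum in question is its coefficient of `z^(2n-ℓ)`, which
vanishes because `2n - ℓ ≠ n`.
-/

namespace Polynomial

variable {R : Type*} [CommSemiring R] [StarRing R]

noncomputable def conjReflect (N : ℕ) (p : R[X]) : R[X] :=
  reflect N (p.map (starRingEnd R))

theorem conjReflect_add (N : ℕ) (p q : R[X]) :
    conjReflect N (p + q) = conjReflect N p + conjReflect N q := by
  simp [conjReflect, reflect_add]

theorem conjReflect_C_mul (N : ℕ) (c : R) (p : R[X]) :
    conjReflect N (C c * p) = C (starRingEnd R c) * conjReflect N p := by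
  simp [conjReflect, reflect_C_mul]

theorem conjReflect_succ {N : ℕ} {p : R[X]} (hp : p.natDegree ≤ N) :
    conjReflect (N + 1) p = conjReflect N p * X := by
  simpa [conjReflect] using reflect_mul (p.map (starRingEnd R)) 1 (natDegree_map_le.trans hp)
    (natDegree_one.trans_le zero_le_one)

theorem conjReflect_succ_X_mul {N : ℕ} {p : R[X]} (hp : p.natDegree ≤ N) :
    conjReflect (N + 1) (X * p) = conjReflect N p := by
  rw [add_comm, conjReflect, Polynomial.map_mul, map_X,
    reflect_mul _ _ natDegree_X_le (natDegree_map_le.trans hp)]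
  simp [conjReflect]

theorem natDegree_conjReflect_le {N : ℕ} {p : R[X]} (hp : p.natDegree ≤ N) :
    (conjReflect N p).natDegree ≤ N :=
  natDegree_reflect_le.trans (max_le le_rfl (natDegree_map_le.trans hp))

theorem coeff_mul_conjReflect {N ℓ : ℕ} {p q : R[X]} (hp : p.natDegree ≤ N)
    (hq : q.natDegree ≤ N) (hℓ : ℓ ≤ N) :
    (p * conjReflect N q).coeff (2 * N - ℓ) =
      ∑ j ∈ Finset.range (ℓ + 1), p.coeff (N + j - ℓ) * starRingEnd R (q.coeff j) := by
  rw [← revAt_le (by omega : ℓ ≤ 2 * N), ← coeff_reflect, two_mul,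
    reflect_mul _ _ hp (natDegree_conjReflect_le hq), conjReflect, reflect_reflect, coeff_mul,
    ← Finset.Nat.sum_antidiagonal_swap, Finset.Nat.sum_antidiagonal_eq_sum_range_succ_mk]
  refine Finset.sum_congr rfl fun j hj => ?_
  rw [Finset.mem_range] at hj
  simp [coeff_reflect, coeff_map, revAt_le (by omega : ℓ - j ≤ N),
    show N - (ℓ - j) = N + j - ℓ by omega]

end Polynomial

open Polynomial

theorem natDegree_schurAB_le (γ : ℕ → ℂ) (n : ℕ) :
    ∀ j, (schurAB γ n j).1.natDegree ≤ j ∧ (schurAB γ n j).2.natDegree ≤ j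
  | 0 => by simp [schurAB]
  | j + 1 => by
    obtain ⟨hA, hB⟩ := natDegree_schurAB_le γ n j
    simp only [schurAB]
    constructor <;> compute_degree
    all_goals omega

theorem schurAB_snd_mul_conjReflect_sub (γ : ℕ → ℂ) (n : ℕ) :
    ∀ j, (schurAB γ n j).2 * conjReflect j (schurAB γ n j).2
        - (schurAB γ n j).1 * conjReflect j (schurAB γ n j).1 =
      C (∏ i ∈ Finset.range (j + 1), (1 - γ (n - i) * starRingEnd ℂ (γ (n - i)))) * X ^ j
  | 0 => by
    simp [schurAB, conjReflect, reflect_C]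
  | j + 1 => by
    obtain ⟨hA, hB⟩ := natDegree_schurAB_le γ n j
    have ih := schurAB_snd_mul_conjReflect_sub γ n j
    simp only [schurAB.eq_2, Nat.sub_sub]
    rw [conjReflect_add, conjReflect_add, mul_assoc, conjReflect_succ_X_mul hA,
      conjReflect_succ_X_mul ((natDegree_C_mul_le _ _).trans hA), conjReflect_C_mul,
      conjReflect_C_mul, conjReflect_succ hB, Complex.conj_conj, Finset.prod_range_succ,
      pow_succ]
    simp only [map_mul, map_sub, map_one]
    linear_combination (1 - C (γ (n - (j + 1))) * C (starRingEnd ℂ (γ (n - (j + 1))))) * X * ih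

theorem stmt_5_general (n : ℕ) (γ : ℕ → ℂ)
    (a b : ℕ → ℂ) (ha : ∀ j, a j = ((schurAB γ n n).1).coeff j)
    (hb : ∀ j, b j = ((schurAB γ n n).2).coeff j) :
    ∀ ℓ < n, ∑ j ∈ Finset.range (ℓ + 1),
      (b (n + j - ℓ) * starRingEnd ℂ (b j) - a (n + j - ℓ) * starRingEnd ℂ (a j)) = 0 := by
  intro ℓ hℓ
  obtain ⟨hA, hB⟩ := natDegree_schurAB_le γ n n
  have h := congrArg (coeff · (2 * n - ℓ)) (schurAB_snd_mul_conjReflect_sub γ n n)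
  simp only [coeff_sub, coeff_mul_conjReflect hB hB hℓ.le, coeff_mul_conjReflect hA hA hℓ.le,
    coeff_C_mul_X_pow, if_neg (show 2 * n - ℓ ≠ n by omega)] at h
  simpa only [ha, hb, Finset.sum_sub_distrib] using h

/-- writing `a_j`, `b_j` for the coefficients of `z^j` in `A_n`, `B_n`,
for every `0 ≤ ℓ ≤ n-1` one has
`Σ_{j=0}^{ℓ} ( b_{n+j-ℓ}·conj(b_j) - a_{n+j-ℓ}·conj(a_j) ) = 0`. -/
theorem stmt_5 (n : ℕ) (hn : 1 ≤ n) (γ : ℕ → ℂ)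
    (hγ : ∀ j ≤ n, ‖γ j‖ < 1)
    (a b : ℕ → ℂ) (ha : ∀ j, a j = ((schurAB γ n n).1).coeff j)
    (hb : ∀ j, b j = ((schurAB γ n n).2).coeff j) :
    ∀ ℓ < n, ∑ j ∈ Finset.range (ℓ + 1),
      (b (n + j - ℓ) * starRingEnd ℂ (b j) - a (n + j - ℓ) * starRingEnd ℂ (a j)) = 0 :=
  stmt_5_general n γ a b ha hb
end

section
/- If for some index i with 0 ≤ i ≤ n+1 one has deg N_i < deg D_i (strict degree comparison with deg 0 = −∞, i.e. f_i vanishes at infinity), then for every j with i ≤ j ≤ n+1 one has deg N_j < deg D_j and d_j = d_i; that is, the condition f(∞) = 0 propagates forward along the backward Schur algorithm with constant McMillan degree. -/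
open Polynomial

/-!
Inverting one step of the backward Schur recursion gives
`(1 - a b) D' = D - b N` and `(1 - a b) z N' = N - a D`, with `1 - a b` a nonzero constant.
If `deg N < deg D`, the first identity gives `deg D' = deg D` and the second
`deg N' < deg (z N') ≤ deg D`. Since `D_j` then keeps its degree and dominates `N_j`, the
McMillan degree `d_j = deg D_j` is constant.
-/

namespace Polynomial

theorem degree_C_mul_le {K : Type*} [Semiring K] (a : K) (p : K[X]) :
    (C a * p).degree ≤ p.degree := by
  simpa only [smul_eq_C_mul] using degree_smul_le a p

section SchurStep

variable {K : Type*} [Field K] {a b : K} {N D N' D' : K[X]}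

theorem C_one_sub_mul_mul_eq_of_schurStep (hN : N = X * N' + C a * D')
    (hD : D = X * C b * N' + D') :
    C (1 - a * b) * D' = D - C b * N ∧ C (1 - a * b) * (N' * X) = N - C a * D := by
  subst hN hD
  constructor <;> simp only [map_sub, map_mul, map_one] <;> ring

theorem degree_eq_of_schurStep (hab : a * b ≠ 1) (hN : N = X * N' + C a * D')
    (hD : D = X * C b * N' + D') (hlt : N.degree < D.degree) : D'.degree = D.degree := by
  have hc : 1 - a * b ≠ 0 := sub_ne_zero.mpr hab.symm
  have hbN : (C b * N).degree < D.degree := (degree_C_mul_le b N).trans_lt hlt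
  rw [← degree_sub_eq_left_of_degree_lt hbN, ← (C_one_sub_mul_mul_eq_of_schurStep hN hD).1,
    degree_C_mul hc]

theorem degree_lt_degree_of_schurStep (hab : a * b ≠ 1) (hN : N = X * N' + C a * D')
    (hD : D = X * C b * N' + D') (hlt : N.degree < D.degree) : N'.degree < D'.degree := by
  have hc : 1 - a * b ≠ 0 := sub_ne_zero.mpr hab.symm
  have hD'eq := degree_eq_of_schurStep hab hN hD hlt
  have hN'X : (N' * X).degree ≤ D.degree := by
    have h := degree_sub_le N (C a * D)
    rw [← (C_one_sub_mul_mul_eq_of_schurStep hN hD).2, degree_C_mul hc] at h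
    exact h.trans (max_le hlt.le (degree_C_mul_le a D))
  rcases eq_or_ne N' 0 with rfl | hN'
  · rw [degree_zero, bot_lt_iff_ne_bot, hD'eq]
    exact (bot_le.trans_lt hlt).ne'
  · calc N'.degree < (N' * X).degree := degree_lt_degree_mul_X hN'
      _ ≤ D.degree := hN'X
      _ = D'.degree := hD'eq.symm

end SchurStep

theorem degree_lt_and_degree_eq_of_schurRecursion {K : Type*} [Field K] {n : ℕ}
    {a b : ℕ → K} (hab : ∀ j ≤ n, a j * b j ≠ 1) {N D : ℕ → K[X]}
    (hN : ∀ j ≤ n, N j = X * N (j + 1) + C (a j) * D (j + 1))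
    (hD : ∀ j ≤ n, D j = X * C (b j) * N (j + 1) + D (j + 1))
    {i : ℕ} (hlt : (N i).degree < (D i).degree) :
    ∀ j, i ≤ j → j ≤ n + 1 → (N j).degree < (D j).degree ∧ (D j).degree = (D i).degree := by
  intro j hij hjn
  induction j, hij using Nat.le_induction with
  | base => exact ⟨hlt, rfl⟩
  | succ k _ ih =>
    have hkn : k ≤ n := Nat.lt_succ_iff.mp hjn
    obtain ⟨hltk, hDk⟩ := ih (by omega)
    exact ⟨degree_lt_degree_of_schurStep (hab k hkn) (hN k hkn) (hD k hkn) hltk,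
      (degree_eq_of_schurStep (hab k hkn) (hN k hkn) (hD k hkn) hltk).trans hDk⟩

end Polynomial

theorem Complex.mul_conj_ne_one_of_norm_lt_one {z : ℂ} (hz : ‖z‖ < 1) :
    z * starRingEnd ℂ z ≠ 1 := by
  rw [Complex.mul_conj, Complex.normSq_eq_norm_sq]
  intro h
  have hsq : ‖z‖ ^ 2 = 1 := by exact_mod_cast h
  nlinarith [norm_nonneg z]

theorem stmt_13_general (n : ℕ) (γ : ℕ → ℂ) (hγ : ∀ j ≤ n, ‖γ j‖ < 1)
    (N D : ℕ → Polynomial ℂ)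
    (hN : ∀ j ≤ n, N j = X * N (j + 1) + C (γ j) * D (j + 1))
    (hD : ∀ j ≤ n, D j = X * C (starRingEnd ℂ (γ j)) * N (j + 1) + D (j + 1))
    (d : ℕ → ℕ) (hd : ∀ j, d j = max (N j).natDegree (D j).natDegree) :
    ∀ i ≤ n + 1, (N i).degree < (D i).degree →
      ∀ j, i ≤ j → j ≤ n + 1 → (N j).degree < (D j).degree ∧ d j = d i := by
  intro i _ hlt j hij hjn
  obtain ⟨hltj, hDj⟩ := degree_lt_and_degree_eq_of_schurRecursion
    (fun j hj => Complex.mul_conj_ne_one_of_norm_lt_one (hγ j hj)) hN hD hlt j hij hjn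
  refine ⟨hltj, ?_⟩
  rw [hd, hd, max_eq_right (natDegree_le_natDegree hltj.le),
    max_eq_right (natDegree_le_natDegree hlt.le), natDegree_eq_of_degree_eq hDj]

/-- Lemma 2.3, second part: in the backward Schur algorithm
`N_j = z·N_{j+1} + γ_j·D_{j+1}`, `D_j = z·conj(γ_j)·N_{j+1} + D_{j+1}` started from a
coprime pair `(N_{n+1}, D_{n+1})` with `D_{n+1}(0) ≠ 0`, if `deg N_i < deg D_i`
(strict degrees, `deg 0 = -∞`, i.e. `f_i(∞) = 0`) for some `i ≤ n+1`, then for every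
`j` with `i ≤ j ≤ n+1` one has `deg N_j < deg D_j` and
`d_j = d_i` where `d_j = max(deg N_j, deg D_j)` (natural-number degrees). -/
theorem stmt_13 (n : ℕ) (γ : ℕ → ℂ) (hγ : ∀ j ≤ n, ‖γ j‖ < 1)
    (N D : ℕ → Polynomial ℂ)
    (hcop : IsCoprime (N (n + 1)) (D (n + 1))) (hD0 : (D (n + 1)).eval 0 ≠ 0)
    (hN : ∀ j ≤ n, N j = X * N (j + 1) + C (γ j) * D (j + 1))
    (hD : ∀ j ≤ n, D j = X * C (starRingEnd ℂ (γ j)) * N (j + 1) + D (j + 1))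
    (d : ℕ → ℕ) (hd : ∀ j, d j = max (N j).natDegree (D j).natDegree) :
    ∀ i ≤ n + 1, (N i).degree < (D i).degree →
      ∀ j, i ≤ j → j ≤ n + 1 → (N j).degree < (D j).degree ∧ d j = d i :=
  stmt_13_general n γ hγ N D hN hD d hd
end

section
/- Let k > n be an integer, let β'_0, …, β'_{k−1} and α'_0, …, α'_k be complex numbers, and set N_E(z) = β'_0 + β'_1 z + … + β'_{k−1} z^{k−1} and D_E(z) = α'_0 + α'_1 z + … + α'_k z^k. Then the polynomials N_f = z·B_n^{♯n}·N_E + A_n·D_E and D_f = z·A_n^{♯n}·N_E + B_n·D_E both have degree at most k if and only if for every ℓ with 0 ≤ ℓ ≤ n−1: Σ_{j=0}^{n−ℓ−1} ( conj(b_{n−ℓ−j−1})·β'_{k−1−j} + a_{ℓ+j+1}·α'_{k−j} ) = 0. (This justifies Step 4′ of the algorithm: only the top n numerator coefficients of the parameter are constrained, by the same relation (β'_{k−1}, …, β'_{k−n})ᵀ = −B̃^{−1}A·(α'_k, …, α'_{k−n+1})ᵀ as in the case k = n, while the remaining coefficients are free.) -/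
/-!
Write `N_f = z B^♯ N_E + A D_E` and `D_f = z A^♯ N_E + B D_E`. Both have degree at most `n + k`,
and the coefficient of `z^(k+ℓ+1)` in `N_f` is exactly the `ℓ`-th sum of the condition, so the
condition says precisely that `deg N_f ≤ k`. This forces `deg D_f ≤ k`: the recursion
preserves `B B^♯ - A A^♯ = c z^n`, hence `B^♯ D_f - A^♯ N_f = c z^n D_E` has degree at most
`n + k`, while `B^♯` is monic of degree `n` because `B(0) = 1`.
-/

open Polynomial

/-- The reflection `P^{♯k}`: the coefficient of `z^j` is `conj` of the coefficient of
`z^{k-j}` of `P`, i.e. `P^{♯k}(z) = z^k · conj(P(1/conj z))` for `P` of degree ≤ k. -/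
noncomputable def sharp (k : ℕ) (P : Polynomial ℂ) : Polynomial ℂ :=
  ∑ j ∈ Finset.range (k + 1), C (starRingEnd ℂ (P.coeff (k - j))) * X ^ j

open Finset

section Coefficients

variable {R : Type*} [Semiring R]

theorem coeff_sum_range_C_mul_X_pow (c : ℕ → R) (K i : ℕ) :
    (∑ j ∈ range K, C (c j) * X ^ j).coeff i = if i < K then c i else 0 := by
  simp

theorem natDegree_sum_range_C_mul_X_pow_le (c : ℕ → R) (K : ℕ) :
    (∑ j ∈ range K, C (c j) * X ^ j).natDegree ≤ K - 1 :=
  natDegree_le_iff_coeff_eq_zero.2 fun i hi => by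
    rw [coeff_sum_range_C_mul_X_pow, if_neg (by omega)]

theorem coeff_mul_of_natDegree_le_add_succ {p q : R[X]} {n m : ℕ} (hp : p.natDegree ≤ n)
    (hq : q.natDegree ≤ m) (hnm : n ≤ m + 1) (ℓ : ℕ) :
    (p * q).coeff (m + ℓ + 1) =
      ∑ t ∈ range (n - ℓ), p.coeff (ℓ + t + 1) * q.coeff (m - t) := by
  rw [coeff_mul, Nat.sum_antidiagonal_eq_sum_range_succ (fun i j => p.coeff i * q.coeff j),
    ← sum_subset (s₁ := Ico (ℓ + 1) (n + 1))]
  · rw [sum_Ico_eq_sum_range, show n + 1 - (ℓ + 1) = n - ℓ by omega]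
    refine sum_congr rfl fun t _ => ?_
    rw [show m + ℓ + 1 - (ℓ + 1 + t) = m - t by omega, add_right_comm]
  · intro i hi
    simp only [mem_Ico, mem_range] at hi ⊢
    omega
  · intro i _ hi
    simp only [mem_Ico, not_and_or, not_le, not_lt] at hi
    rcases hi with hi | hi
    · rw [coeff_eq_zero_of_natDegree_lt (p := q) (by omega), mul_zero]
    · rw [coeff_eq_zero_of_natDegree_lt (p := p) (by omega), zero_mul]

end Coefficients

section Sharp

variable {n : ℕ} {P : ℂ[X]}

theorem coeff_sharp (n : ℕ) (P : ℂ[X]) (i : ℕ) :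
    (sharp n P).coeff i = if i ≤ n then starRingEnd ℂ (P.coeff (n - i)) else 0 := by
  simp [sharp, finsetSum_coeff]

theorem natDegree_sharp_le (n : ℕ) (P : ℂ[X]) : (sharp n P).natDegree ≤ n :=
  natDegree_le_iff_coeff_eq_zero.2 fun i hi => by rw [coeff_sharp, if_neg (by omega)]

theorem sharp_add (n : ℕ) (P Q : ℂ[X]) : sharp n (P + Q) = sharp n P + sharp n Q := by
  ext i
  simp only [coeff_sharp, coeff_add]
  split_ifs <;> simp

theorem sharp_C_mul (n : ℕ) (c : ℂ) (P : ℂ[X]) :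
    sharp n (C c * P) = C (starRingEnd ℂ c) * sharp n P := by
  ext i
  simp only [coeff_sharp, coeff_C_mul]
  split_ifs <;> simp

theorem sharp_succ_X_mul (n : ℕ) (P : ℂ[X]) : sharp (n + 1) (X * P) = sharp n P := by
  ext i
  simp only [coeff_sharp]
  by_cases h : i ≤ n
  · rw [if_pos (by omega), if_pos h, show n + 1 - i = n - i + 1 by omega, coeff_X_mul]
  · rw [if_neg h]
    split_ifs
    · rw [show n + 1 - i = 0 by omega, coeff_X_mul_zero, map_zero]
    · rfl

theorem sharp_succ_of_natDegree_le (h : P.natDegree ≤ n) : sharp (n + 1) P = X * sharp n P := by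
  ext i
  rcases i with _ | i
  · rw [coeff_sharp, if_pos (Nat.zero_le _), coeff_X_mul_zero,
      coeff_eq_zero_of_natDegree_lt (by omega), map_zero]
  · simp only [coeff_X_mul, coeff_sharp, Nat.add_le_add_iff_right, Nat.add_sub_add_right]

theorem sharp_monic (hP : P.coeff 0 = 1) : (sharp n P).Monic :=
  monic_of_natDegree_le_of_coeff_eq_one n (natDegree_sharp_le n P) (by simp [coeff_sharp, hP])

end Sharp

section SchurAB

variable (γ : ℕ → ℂ) (n : ℕ)

theorem schurAB_natDegree_le :
    ∀ j, (schurAB γ n j).1.natDegree ≤ j ∧ (schurAB γ n j).2.natDegree ≤ j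
  | 0 => by simp [schurAB]
  | j + 1 => by
    obtain ⟨hA, hB⟩ := schurAB_natDegree_le j
    constructor
    · refine natDegree_add_le_of_degree_le ?_ ?_
      · exact natDegree_mul_le_of_le natDegree_X_le hA |>.trans (by omega)
      · exact natDegree_mul_le_of_le (natDegree_C _).le hB |>.trans (by omega)
    · refine natDegree_add_le_of_degree_le ?_ (by omega)
      exact natDegree_mul_le_of_le (natDegree_mul_le_of_le natDegree_X_le (natDegree_C _).le) hA
        |>.trans (by omega)

theorem schurAB_snd_coeff_zero : ∀ j, (schurAB γ n j).2.coeff 0 = 1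
  | 0 => by simp [schurAB]
  | j + 1 => by simp [schurAB, schurAB_snd_coeff_zero j, mul_assoc]

theorem schurAB_sharp_identity : ∀ j,
    (schurAB γ n j).2 * sharp j (schurAB γ n j).2
        - (schurAB γ n j).1 * sharp j (schurAB γ n j).1
      = C (∏ i ∈ range (j + 1), (1 - γ (n - i) * starRingEnd ℂ (γ (n - i)))) * X ^ j
  | 0 => by
    have h1 : sharp 0 (1 : ℂ[X]) = 1 := by ext i; simp [coeff_sharp, coeff_one]
    have hγ : sharp 0 (C (γ n)) = C (starRingEnd ℂ (γ n)) := by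
      ext i; simp [coeff_sharp, coeff_C]
    simp only [schurAB, h1, hγ, zero_add, prod_range_one, Nat.sub_zero, pow_zero, map_sub,
      map_mul, map_one]
    ring
  | j + 1 => by
    have ih := schurAB_sharp_identity j
    have hB := (schurAB_natDegree_le γ n j).2
    simp only [schurAB]
    set A := (schurAB γ n j).1
    set B := (schurAB γ n j).2
    set g := γ (n - j - 1)
    have hsA : sharp (j + 1) (X * A + C g * B)
        = sharp j A + C (starRingEnd ℂ g) * (X * sharp j B) := by
      rw [sharp_add, sharp_succ_X_mul, sharp_C_mul, sharp_succ_of_natDegree_le hB]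
    have hsB : sharp (j + 1) (X * C (starRingEnd ℂ g) * A + B)
        = C g * sharp j A + X * sharp j B := by
      rw [sharp_add, mul_assoc, sharp_succ_X_mul, sharp_C_mul, Complex.conj_conj,
        sharp_succ_of_natDegree_le hB]
    rw [hsA, hsB]
    calc _ = (1 - C g * C (starRingEnd ℂ g)) * X * (B * sharp j B - A * sharp j A) := by ring
      _ = _ := by
        rw [ih, prod_range_succ _ (j + 1), ← Nat.sub_sub]
        simp only [map_mul, map_sub, map_one]
        ring

end SchurAB

section LinearFractional

variable {n k : ℕ} {P Q N D : ℂ[X]}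

theorem coeff_X_mul_sharp_mul_add_mul (hQ : Q.natDegree ≤ n) (hN : N.natDegree < k)
    (hD : D.natDegree ≤ k) (hnk : n ≤ k) (ℓ : ℕ) :
    (X * sharp n P * N + Q * D).coeff (k + ℓ + 1) = ∑ t ∈ range (n - ℓ),
      (starRingEnd ℂ (P.coeff (n - ℓ - t - 1)) * N.coeff (k - 1 - t)
        + Q.coeff (ℓ + t + 1) * D.coeff (k - t)) := by
  have hPN := coeff_mul_of_natDegree_le_add_succ (natDegree_sharp_le n P)
    (Nat.le_sub_one_of_lt hN) (by omega) ℓ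
  rw [show k - 1 + ℓ + 1 = k + ℓ by omega] at hPN
  rw [coeff_add, mul_assoc, coeff_X_mul, hPN,
    coeff_mul_of_natDegree_le_add_succ hQ hD (by omega), ← sum_add_distrib]
  refine sum_congr rfl fun t ht => ?_
  rw [mem_range] at ht
  rw [coeff_sharp, if_pos (by omega), show n - (ℓ + t + 1) = n - ℓ - t - 1 by omega,
    Nat.sub_sub]

theorem natDegree_X_mul_sharp_mul_add_mul_le_iff (hQ : Q.natDegree ≤ n)
    (hN : N.natDegree < k) (hD : D.natDegree ≤ k) (hnk : n ≤ k) :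
    (X * sharp n P * N + Q * D).natDegree ≤ k ↔ ∀ ℓ < n, ∑ t ∈ range (n - ℓ),
      (starRingEnd ℂ (P.coeff (n - ℓ - t - 1)) * N.coeff (k - 1 - t)
        + Q.coeff (ℓ + t + 1) * D.coeff (k - t)) = 0 := by
  have hdeg : (X * sharp n P * N + Q * D).natDegree ≤ k + n := by
    refine natDegree_add_le_of_degree_le ?_ ?_
    · exact natDegree_mul_le_of_le (natDegree_mul_le_of_le natDegree_X_le
        (natDegree_sharp_le n P)) (Nat.le_sub_one_of_lt hN) |>.trans (by omega)
    · exact natDegree_mul_le_of_le hQ hD |>.trans (by omega)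
  simp only [natDegree_le_iff_coeff_eq_zero, ← coeff_X_mul_sharp_mul_add_mul hQ hN hD hnk]
  refine ⟨fun h ℓ _ => h _ (by omega), fun h m hm => ?_⟩
  by_cases hmn : m ≤ k + n
  · obtain ⟨ℓ, rfl⟩ : ∃ ℓ, m = k + ℓ + 1 := ⟨m - k - 1, by omega⟩
    exact h ℓ (by omega)
  · exact natDegree_le_iff_coeff_eq_zero.1 hdeg m (by omega)

theorem natDegree_X_mul_sharp_mul_add_mul_le_of_swap {A B : ℂ[X]} {c : ℂ}
    (hB : B.coeff 0 = 1) (hAB : B * sharp n B - A * sharp n A = C c * X ^ n)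
    (hD : D.natDegree ≤ k) (h : (X * sharp n B * N + A * D).natDegree ≤ k) :
    (X * sharp n A * N + B * D).natDegree ≤ k := by
  set Nf := X * sharp n B * N + A * D
  set Df := X * sharp n A * N + B * D
  have hswap : sharp n B * Df = sharp n A * Nf + C c * X ^ n * D := by
    rw [← hAB]
    ring
  rcases eq_or_ne Df 0 with h0 | h0
  · rw [h0, natDegree_zero]
    exact Nat.zero_le _
  have hle : (sharp n B * Df).natDegree ≤ n + k := by
    rw [hswap]
    refine natDegree_add_le_of_degree_le (natDegree_mul_le_of_le (natDegree_sharp_le n A) h) ?_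
    exact natDegree_mul_le_of_le (natDegree_C_mul_X_pow_le c n) hD
  rw [(sharp_monic hB).natDegree_mul' h0, natDegree_eq_of_le_of_coeff_ne_zero
    (natDegree_sharp_le n B) (by simp [coeff_sharp, hB])] at hle
  omega

end LinearFractional

theorem stmt_17_general (n : ℕ) (γ : ℕ → ℂ)
    (a b : ℕ → ℂ) (ha : ∀ j, a j = ((schurAB γ n n).1).coeff j)
    (hb : ∀ j, b j = ((schurAB γ n n).2).coeff j)
    (k : ℕ) (hk : n < k) (β' α' : ℕ → ℂ)
    (NE DE : Polynomial ℂ)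
    (hNE : NE = ∑ j ∈ Finset.range k, C (β' j) * X ^ j)
    (hDE : DE = ∑ j ∈ Finset.range (k + 1), C (α' j) * X ^ j) :
    ((X * sharp n (schurAB γ n n).2 * NE + (schurAB γ n n).1 * DE).natDegree ≤ k ∧
     (X * sharp n (schurAB γ n n).1 * NE + (schurAB γ n n).2 * DE).natDegree ≤ k) ↔
    ∀ ℓ < n, ∑ j ∈ Finset.range (n - ℓ),
      (starRingEnd ℂ (b (n - ℓ - j - 1)) * β' (k - 1 - j) + a (ℓ + j + 1) * α' (k - j)) = 0 := by
  have hN : NE.natDegree < k :=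
    hNE ▸ (natDegree_sum_range_C_mul_X_pow_le β' k).trans_lt (by omega)
  have hD : DE.natDegree ≤ k := hDE ▸ natDegree_sum_range_C_mul_X_pow_le α' (k + 1)
  have hβ : ∀ i < k, NE.coeff i = β' i := fun i hi => by
    rw [hNE, coeff_sum_range_C_mul_X_pow, if_pos hi]
  have hα : ∀ i ≤ k, DE.coeff i = α' i := fun i hi => by
    rw [hDE, coeff_sum_range_C_mul_X_pow, if_pos (by omega)]
  have hNf := natDegree_X_mul_sharp_mul_add_mul_le_iff (P := (schurAB γ n n).2)
    (schurAB_natDegree_le γ n n).1 hN hD hk.le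
  simp (disch := omega) only [hβ, hα, ← ha, ← hb] at hNf
  rw [← hNf]
  exact ⟨And.left, fun h => ⟨h, natDegree_X_mul_sharp_mul_add_mul_le_of_swap
    (schurAB_snd_coeff_zero γ n n) (schurAB_sharp_identity γ n n) hD h⟩⟩

/-- justifying Step 4′: let `k > n`, `N_E = Σ_{j<k} β'_j z^j`,
`D_E = Σ_{j≤k} α'_j z^j`. Then `N_f = z·B_n^{♯n}·N_E + A_n·D_E` and
`D_f = z·A_n^{♯n}·N_E + B_n·D_E` both have degree at most `k` if and only if for every
`0 ≤ ℓ ≤ n-1`: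
`Σ_{j=0}^{n-ℓ-1} ( conj(b_{n-ℓ-j-1})·β'_{k-1-j} + a_{ℓ+j+1}·α'_{k-j} ) = 0`,
where `a_j`, `b_j` are the coefficients of `A_n`, `B_n`. -/
theorem stmt_17 (n : ℕ) (hn : 1 ≤ n) (γ : ℕ → ℂ)
    (hγ : ∀ j ≤ n, ‖γ j‖ < 1)
    (a b : ℕ → ℂ) (ha : ∀ j, a j = ((schurAB γ n n).1).coeff j)
    (hb : ∀ j, b j = ((schurAB γ n n).2).coeff j)
    (k : ℕ) (hk : n < k) (β' α' : ℕ → ℂ)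
    (NE DE : Polynomial ℂ)
    (hNE : NE = ∑ j ∈ Finset.range k, C (β' j) * X ^ j)
    (hDE : DE = ∑ j ∈ Finset.range (k + 1), C (α' j) * X ^ j) :
    ((X * sharp n (schurAB γ n n).2 * NE + (schurAB γ n n).1 * DE).natDegree ≤ k ∧
     (X * sharp n (schurAB γ n n).1 * NE + (schurAB γ n n).2 * DE).natDegree ≤ k) ↔
    ∀ ℓ < n, ∑ j ∈ Finset.range (n - ℓ),
      (starRingEnd ℂ (b (n - ℓ - j - 1)) * β' (k - 1 - j) + a (ℓ + j + 1) * α' (k - j)) = 0 :=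
  stmt_17_general n γ a b ha hb k hk β' α' NE DE hNE hDE
end
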